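/- Let F = {y² − σ(y), y² − σ²(y)} over ℚ and f = y(y − 1). The one-sided sequence (−1, 1, 1, 1, …) ∈ ℚ^ℕ is a solution of F = 0 in the sequence ring ℚ^ℕ, but f does not vanish at it (i.e., the sequence obtained by evaluating f componentwise is nonzero). Hence f vanishes on all two-sided sequence solutions of F but not on all one-sided sequence solutions. -/
import Mathlib


/-- The one-sided sequence `(−1, 1, 1, 1, …) ∈ ℚ^ℕ` is a solution of the system
`F = {y² − σ(y), y² − σ²(y)}` in the sequence ring `ℚ^ℕ`, but `f = y(y−1)` does not vanish at
it: the sequence obtained by evaluating `f` componentwise is nonzero. -/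
theorem stmt4 :
    let b : ℕ → ℚ := fun i => if i = 0 then -1 else 1
    (∀ i : ℕ, (b i) ^ 2 - b (i + 1) = 0) ∧
    (∀ i : ℕ, (b i) ^ 2 - b (i + 2) = 0) ∧
    (fun i : ℕ => b i * (b i - 1)) ≠ 0 := by
  intro b
  refine ⟨fun i => ?_, fun i => ?_, fun h => ?_⟩
  · by_cases h : i = 0 <;> simp [b, h]
  · by_cases h : i = 0 <;> simp [b, h]
  · have := congrFun h 0
    norm_num [b] at this
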